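/- arXiv:math/0411309 — 5 statements merged into one kernel-verified Lean document; each statement's English description precedes it below -/
import Mathlib

section
/- Let X be a real normed space and G a normed abelian group. Define the flat norm on 0-chains by F(P) = inf over 1-chains Q of M(Q) + M(∂Q - P), where M(∑ gᵢ[xᵢ,yᵢ]) = ∑ |gᵢ|·‖yᵢ-xᵢ‖. Then for a 0-chain P supported at a single point with coefficient g, for every 1-chain Q, M(∂Q - P) ≥ |g|. -/
/-- The mass of a 0-chain with respect to a group norm `nu`. -/
noncomputable def mass0 {X G : Type*} [AddCommGroup G] (nu : G → ℝ) (P : X →₀ G) : ℝ :=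
  ∑ x ∈ P.support, nu (P x)

/-- The boundary of a 1-chain, represented as a finite list of coefficiented segments
`g[x,y]`: the 0-chain `∑ (g[y] - g[x])`. -/
noncomputable def bdry1 {X G : Type*} [AddCommGroup G] (Q : List (G × X × X)) : X →₀ G :=
  (Q.map fun q => Finsupp.single q.2.2 q.1 - Finsupp.single q.2.1 q.1).sum

theorem stmt5 {X G : Type*} [NormedAddCommGroup X] [NormedSpace ℝ X] [AddCommGroup G]
    (nu : G → ℝ)
    (h0 : nu 0 = 0) (hnonneg : ∀ g : G, 0 ≤ nu g)
    (hneg : ∀ g : G, nu (-g) = nu g)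
    (htri : ∀ g h : G, nu (g + h) ≤ nu g + nu h)
    (x₀ : X) (g : G) (Q : List (G × X × X)) :
    nu g ≤ mass0 nu (bdry1 Q - Finsupp.single x₀ g) := by
  classical
  -- total coefficient sum as an additive hom
  let tot : (X →₀ G) →+ G := Finsupp.liftAddHom (fun _ => AddMonoidHom.id G)
  have htot_single : ∀ (x : X) (a : G), tot (Finsupp.single x a) = a := by
    intro x a
    simp [tot, Finsupp.liftAddHom_apply_single]
  have htot_bdry : tot (bdry1 Q) = 0 := by
    unfold bdry1
    rw [map_list_sum]
    apply List.sum_eq_zero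
    intro a ha
    obtain ⟨q, hq, rfl⟩ := List.mem_map.1 ha
    obtain ⟨p, hp, rfl⟩ := List.mem_map.1 hq
    rw [map_sub, htot_single, htot_single, sub_self]
  -- triangle inequality for finite sums
  have hsum : ∀ (s : Finset X) (f : X → G), nu (∑ x ∈ s, f x) ≤ ∑ x ∈ s, nu (f x) := by
    intro s f
    induction s using Finset.induction_on with
    | empty => simp [h0]
    | insert a s hx ih =>
        rw [Finset.sum_insert hx, Finset.sum_insert hx]
        exact le_trans (htri _ _) (by linarith)
  set R := bdry1 Q - Finsupp.single x₀ g with hR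
  have htotR : tot R = -g := by
    rw [hR, map_sub, htot_bdry, htot_single, zero_sub]
  have htotR' : tot R = ∑ x ∈ R.support, R x := by
    simp [tot, Finsupp.liftAddHom_apply, Finsupp.sum]
  calc nu g = nu (tot R) := by rw [htotR, hneg]
    _ = nu (∑ x ∈ R.support, R x) := by rw [htotR']
    _ ≤ ∑ x ∈ R.support, nu (R x) := hsum _ _
    _ = mass0 nu R := rfl
end

section
/- Let Δ ⊂ ℝⁿ be a k-simplex with vertices x₀,…,x_k, let f : Δ → ℝ be a function, and let f̂ be the affine interpolation of f: f̂(∑ aᵢxᵢ) = ∑ aᵢ f(xᵢ) for barycentric coordinates aᵢ ≥ 0, ∑ aᵢ = 1. If f is L-Lipschitz and the simplex has fullness Θ(Δ) ≥ η > 0 (meaning its k-volume divided by diam(Δ)^k is at least η, up to the normalizing factor), then f̂ is Lipschitz on Δ with constant at most c(k)·L/η for a constant c(k) depending only on k. -/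
open MeasureTheory Metric Set Module
open scoped NNReal ENNReal InnerProductSpace

/-!
Write `y ∈ Δ` as `∑ aᵢ xᵢ`. For `j ≥ 1` the barycentric coordinate `aⱼ` equals `⟪vⱼ, y - x₀⟫`
for a vector `vⱼ` of the direction space `V` of `Δ`, so `|aⱼ(y) - aⱼ(z)| ≤ ‖vⱼ‖ ‖y - z‖`, while
`f̂ y - f̂ z = ∑ⱼ (aⱼ(y) - aⱼ(z)) (f xⱼ - f x₀)` and `|f xⱼ - f x₀| ≤ L diam Δ`. It remains to bound
`‖vⱼ‖`: `Δ` lies in the slab `0 ≤ ⟪vⱼ, · - x₀⟫ ≤ 1` of width `‖vⱼ‖⁻¹` and in the ball of radius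
`diam Δ` about `x₀`, i.e. in a box of `V`, so `η diam(Δ)^k ≤ μH[k] Δ ≤ k^k ‖vⱼ‖⁻¹ (2 diam Δ)^(k-1)`.
-/

-- `toLp` is `√(card ι)`-Lipschitz, and `μH` is Lebesgue measure for the sup metric.
lemma hausdorffMeasure_toLp_image_le {ι : Type*} [Fintype ι] (s : Set (ι → ℝ)) :
    μH[Fintype.card ι] (WithLp.toLp 2 '' s) ≤
      (Fintype.card ι : ℝ≥0∞) ^ Fintype.card ι * volume s := by
  have hsqrt : (Fintype.card ι : ℝ≥0) ^ (1 / (2 : ℝ≥0∞)).toReal ≤ Fintype.card ι := by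
    rcases Nat.eq_zero_or_pos (Fintype.card ι) with h | h
    · simp [h]
    · refine (NNReal.rpow_le_rpow_of_exponent_le (by exact_mod_cast h) ?_).trans_eq
        (NNReal.rpow_one _)
      norm_num
  have := ((PiLp.lipschitzWith_toLp 2 fun _ : ι => ℝ).weaken hsqrt).hausdorffMeasure_image_le
    (Nat.cast_nonneg (Fintype.card ι)) s
  rw [hausdorffMeasure_pi_real] at this
  simpa using this

lemma hausdorffMeasure_le_of_subset_slab {E : Type*} [NormedAddCommGroup E]
    [InnerProductSpace ℝ E]
    [MeasurableSpace E] [BorelSpace E] {V : Submodule ℝ E} [FiniteDimensional ℝ V] {m : ℕ}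
    (hV : finrank ℝ V = m + 1) {x₀ : E} {S : Set E} (hSV : ∀ y ∈ S, y - x₀ ∈ V) {v : V}
    (hv : v ≠ 0) {d : ℝ} (hd : 0 ≤ d) (hslab : ∀ y ∈ S, ⟪(v : E), y - x₀⟫_ℝ ∈ Icc 0 1)
    (hball : ∀ y ∈ S, ‖y - x₀‖ ≤ d) :
    μH[(m + 1 : ℕ)] S ≤ ENNReal.ofReal ((m + 1) ^ (m + 1) * (‖v‖⁻¹ * (2 * d) ^ m)) := by
  have hunit : Orthonormal ℝ (({0} : Set (Fin (m + 1))).domRestrict fun _ => ‖v‖⁻¹ • v) :=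
    ⟨fun _ => norm_smul_inv_norm hv, fun i j hij => absurd (Subsingleton.elim i j) hij⟩
  obtain ⟨b, hb⟩ := hunit.exists_orthonormalBasis_extension_of_card_eq (by simpa using hV)
  -- in the coordinates `b.repr`, with `b 0 = v / ‖v‖`, the set `S - x₀` lies in `box`
  let ρ : EuclideanSpace ℝ (Fin (m + 1)) → E := fun c => x₀ + b.repr.symm c
  have hρ : Isometry ρ :=
    (IsometryEquiv.addLeft x₀).isometry.comp (isometry_subtype_coe.comp b.repr.symm.isometry)
  let box : Set (Fin (m + 1) → ℝ) := univ.pi (Fin.cons (Icc 0 ‖v‖⁻¹) fun _ => Icc (-d) d)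
  have hS : S ⊆ ρ '' (WithLp.toLp 2 '' box) := by
    intro y hy
    set c := b.repr ⟨y - x₀, hSV y hy⟩
    refine ⟨c, ⟨c.ofLp, ?_, rfl⟩, by simp [ρ, c]⟩
    rw [mem_univ_pi, Fin.forall_fin_succ]
    refine ⟨?_, fun j => ?_⟩
    · have : c 0 = ‖v‖⁻¹ * ⟪(v : E), y - x₀⟫_ℝ := by
        simp [c, b.repr_apply_apply, hb 0 rfl, real_inner_smul_left]
      obtain ⟨h0, h1⟩ := hslab y hy
      simp only [Fin.cons_zero, this, mem_Icc]
      exact ⟨by positivity, mul_le_of_le_one_right (by positivity) h1⟩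
    · have : |c j.succ| ≤ d := by
        simp only [c, b.repr_apply_apply]
        exact (abs_real_inner_le_norm _ _).trans (by simpa using hball y hy)
      simpa [abs_le] using this
  have hvol : volume box = ENNReal.ofReal ‖v‖⁻¹ * ENNReal.ofReal (2 * d) ^ m := by
    simp [box, volume_pi_pi, Fin.prod_univ_succ, Real.volume_Icc, two_mul]
  calc μH[(m + 1 : ℕ)] S ≤ μH[(m + 1 : ℕ)] (ρ '' (WithLp.toLp 2 '' box)) := measure_mono hS
    _ = μH[(m + 1 : ℕ)] (WithLp.toLp 2 '' box) :=
      hρ.hausdorffMeasure_image (Or.inl (Nat.cast_nonneg _)) _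
    _ ≤ ((m + 1 : ℕ) : ℝ≥0∞) ^ (m + 1) * volume box := by
      simpa using hausdorffMeasure_toLp_image_le box
    _ = ENNReal.ofReal ((m + 1) ^ (m + 1) * (‖v‖⁻¹ * (2 * d) ^ m)) := by
      rw [hvol, ← ENNReal.ofReal_pow (by positivity), ← ENNReal.ofReal_mul (by positivity),
        ← ENNReal.ofReal_natCast, ← ENNReal.ofReal_pow (by positivity),
        ← ENNReal.ofReal_mul (by positivity)]
      push_cast
      rfl

lemma exists_weights_of_mem_convexHull_range {ι E : Type*} [Fintype ι] [AddCommGroup E]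
    [Module ℝ E] {v : ι → E} {y : E} (hy : y ∈ convexHull ℝ (range v)) :
    ∃ a : ι → ℝ, (∀ i, 0 ≤ a i) ∧ ∑ i, a i = 1 ∧ ∑ i, a i • v i = y := by
  classical
  rw [convexHull_range_eq_exists_affineCombination] at hy
  obtain ⟨s, a, ha₀, ha₁, rfl⟩ := hy
  have hsum : ∑ i, (s : Set ι).indicator a i = 1 := by
    rwa [Finset.sum_indicator_subset _ s.subset_univ]
  refine ⟨(s : Set ι).indicator a, fun i => ?_, hsum, ?_⟩
  · by_cases hi : i ∈ s <;> simp [hi, ha₀]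
  · rw [Finset.affineCombination_indicator_subset _ _ s.subset_univ,
      Finset.affineCombination_eq_linear_combination _ _ _ hsum]

lemma sum_mul_sub_sum_mul_eq_sum_succ {m : ℕ} {a b g : Fin (m + 1) → ℝ} (ha : ∑ i, a i = 1)
    (hb : ∑ i, b i = 1) :
    ∑ i, a i * g i - ∑ i, b i * g i = ∑ j : Fin m, (a j.succ - b j.succ) * (g j.succ - g 0) := by
  calc ∑ i, a i * g i - ∑ i, b i * g i = ∑ i, (a i - b i) * (g i - g 0) := by
        simp only [sub_mul, mul_sub, Finset.sum_sub_distrib, ← Finset.sum_mul, ha, hb]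
        ring
    _ = _ := by simp [Fin.sum_univ_succ]

section InnerProductSpace

variable {E : Type*} [NormedAddCommGroup E] [InnerProductSpace ℝ E]

lemma LinearIndependent.exists_inner_eq_coeff {ι : Type*} [Fintype ι] {w : ι → E}
    (hw : LinearIndependent ℝ w) (j : ι) :
    ∃ v ∈ Submodule.span ℝ (range w), ∀ c : ι → ℝ, ⟪v, ∑ i, c i • w i⟫_ℝ = c j := by
  let B := Basis.span hw
  have : FiniteDimensional ℝ (Submodule.span ℝ (range w)) := .of_basis B
  let v := (InnerProductSpace.toDual ℝ _).symm (B.coord j).toContinuousLinearMap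
  refine ⟨v, v.2, fun c => ?_⟩
  have hc : ∑ i, c i • w i = ((∑ i, c i • B i : Submodule.span ℝ (range w)) : E) := by
    simp [B, Basis.span_apply]
  rw [hc, ← Submodule.coe_inner, InnerProductSpace.toDual_symm_apply]
  exact congrFun (B.repr_sum_self c) j

lemma AffineIndependent.exists_inner_eq_weight {m : ℕ} {x : Fin (m + 1) → E}
    (hx : AffineIndependent ℝ x) (j : Fin m) :
    ∃ v ∈ vectorSpan ℝ (range x), ∀ a : Fin (m + 1) → ℝ, ∑ i, a i = 1 →
      ⟪v, ∑ i, a i • x i - x 0⟫_ℝ = a j.succ := by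
  let w : Fin m → E := fun j => x j.succ - x 0
  have hw : LinearIndependent ℝ w :=
    ((affineIndependent_iff_linearIndependent_vsub ℝ x 0).mp hx).comp
      (fun j : Fin m => (⟨j.succ, j.succ_ne_zero⟩ : {i : Fin (m + 1) // i ≠ 0}))
      fun _ _ h => Fin.succ_injective _ (congrArg Subtype.val h)
  obtain ⟨v, hvw, hv⟩ := hw.exists_inner_eq_coeff j
  have hspan : Submodule.span ℝ (range w) ≤ vectorSpan ℝ (range x) :=
    Submodule.span_le.mpr <| range_subset_iff.mpr fun j =>
      vsub_mem_vectorSpan ℝ (mem_range_self _) (mem_range_self _)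
  refine ⟨v, hspan hvw, fun a ha => ?_⟩
  have hdiff : ∑ i, a i • x i - x 0 = ∑ j, a j.succ • w j := by
    calc ∑ i, a i • x i - x 0 = ∑ i, a i • (x i - x 0) := by
          simp [smul_sub, Finset.sum_sub_distrib, ← Finset.sum_smul, ha]
      _ = _ := by simp [Fin.sum_univ_succ, w]
  rw [hdiff, hv]

variable [MeasurableSpace E] [BorelSpace E] {m : ℕ} {x : Fin (m + 2) → E}

lemma AffineIndependent.norm_mul_diam_le (hx : AffineIndependent ℝ x) {η : ℝ}
    (hfull : ENNReal.ofReal (η * diam (convexHull ℝ (range x)) ^ (m + 1)) ≤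
      μH[(m + 1 : ℕ)] (convexHull ℝ (range x)))
    {v : E} (hvV : v ∈ vectorSpan ℝ (range x)) {j : Fin (m + 1)}
    (hv : ∀ a : Fin (m + 2) → ℝ, ∑ i, a i = 1 → ⟪v, ∑ i, a i • x i - x 0⟫_ℝ = a j.succ) :
    ‖v‖ * (η * diam (convexHull ℝ (range x))) ≤ (m + 1) ^ (m + 1) * 2 ^ m := by
  set S := convexHull ℝ (range x)
  set d := diam S
  have hbdd : Bornology.IsBounded S := isBounded_convexHull.mpr (finite_range x).isBounded
  have hxS : ∀ i, x i ∈ S := fun i => subset_convexHull ℝ _ (mem_range_self i)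
  have hd : 0 < d := (dist_pos.mpr (hx.injective.ne Fin.zero_ne_one)).trans_le
    (dist_le_diam_of_mem hbdd (hxS 0) (hxS 1))
  have hv0 : v ≠ 0 := by
    rintro rfl
    simpa using hv (Pi.single j.succ 1) (by simp)
  have hslab : ∀ y ∈ S, ⟪v, y - x 0⟫_ℝ ∈ Icc 0 1 := by
    intro y hy
    obtain ⟨a, ha₀, ha₁, rfl⟩ := exists_weights_of_mem_convexHull_range hy
    rw [hv a ha₁]
    exact ⟨ha₀ _, ha₁ ▸ Finset.single_le_sum (fun i _ => ha₀ i) (Finset.mem_univ _)⟩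
  have hSV : ∀ y ∈ S, y - x 0 ∈ vectorSpan ℝ (range x) := fun y hy =>
    vsub_mem_vectorSpan_of_mem_affineSpan_of_mem_affineSpan (convexHull_subset_affineSpan _ hy)
      (subset_affineSpan ℝ _ (mem_range_self 0))
  have hvol := hfull.trans <| hausdorffMeasure_le_of_subset_slab
    (hx.finrank_vectorSpan (Fintype.card_fin _)) hSV (v := ⟨v, hvV⟩) (by simpa using hv0)
    hd.le hslab fun y hy => by simpa [← dist_eq_norm] using dist_le_diam_of_mem hbdd hy (hxS 0)
  rw [ENNReal.ofReal_le_ofReal_iff (by positivity)] at hvol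
  have hnv : 0 < ‖v‖ := norm_pos_iff.mpr hv0
  refine le_of_mul_le_mul_right ?_ (pow_pos hd m)
  calc ‖v‖ * (η * d) * d ^ m = ‖v‖ * (η * d ^ (m + 1)) := by ring
    _ ≤ ‖v‖ * ((m + 1) ^ (m + 1) * (‖v‖⁻¹ * (2 * d) ^ m)) :=
        mul_le_mul_of_nonneg_left (by simpa using hvol) hnv.le
    _ = (m + 1) ^ (m + 1) * 2 ^ m * d ^ m := by field_simp; ring

theorem AffineIndependent.lipschitzOnWith_interpolant (hx : AffineIndependent ℝ x) {η : ℝ}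
    (hη : 0 < η)
    (hfull : ENNReal.ofReal (η * diam (convexHull ℝ (range x)) ^ (m + 1)) ≤
      μH[(m + 1 : ℕ)] (convexHull ℝ (range x)))
    {K : ℝ≥0} {f fhat : E → ℝ} (hf : LipschitzOnWith K f (convexHull ℝ (range x)))
    (hfhat : ∀ a : Fin (m + 2) → ℝ, (∀ i, 0 ≤ a i) → ∑ i, a i = 1 →
      fhat (∑ i, a i • x i) = ∑ i, a i * f (x i)) :
    LipschitzOnWith (Real.toNNReal ((m + 1) ^ (m + 2) * 2 ^ m / η) * K) fhat
      (convexHull ℝ (range x)) := by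
  set S := convexHull ℝ (range x)
  set d := diam S
  have hbdd : Bornology.IsBounded S := isBounded_convexHull.mpr (finite_range x).isBounded
  have hxS : ∀ i, x i ∈ S := fun i => subset_convexHull ℝ _ (mem_range_self i)
  choose v hvV hv using hx.exists_inner_eq_weight
  have hvert : ∀ i, |f (x i) - f (x 0)| ≤ K * d := fun i => by
    simpa [← Real.dist_eq] using (hf.dist_le_mul _ (hxS i) _ (hxS 0)).trans
      (by gcongr; exact dist_le_diam_of_mem hbdd (hxS i) (hxS 0))
  refine LipschitzOnWith.of_dist_le_mul fun y hy z hz => ?_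
  obtain ⟨a, ha₀, ha₁, rfl⟩ := exists_weights_of_mem_convexHull_range hy
  obtain ⟨b, hb₀, hb₁, rfl⟩ := exists_weights_of_mem_convexHull_range hz
  set D := dist (∑ i, a i • x i) (∑ i, b i • x i)
  have hcoord : ∀ j, |a j.succ - b j.succ| ≤ ‖v j‖ * D := fun j => by
    rw [← hv j a ha₁, ← hv j b hb₁, ← inner_sub_right, sub_sub_sub_cancel_right]
    simpa only [D, dist_eq_norm] using abs_real_inner_le_norm (v j) _
  calc dist (fhat (∑ i, a i • x i)) (fhat (∑ i, b i • x i))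
      = |∑ j : Fin (m + 1), (a j.succ - b j.succ) * (f (x j.succ) - f (x 0))| := by
        rw [Real.dist_eq, hfhat a ha₀ ha₁, hfhat b hb₀ hb₁,
          sum_mul_sub_sum_mul_eq_sum_succ ha₁ hb₁]
    _ ≤ ∑ j : Fin (m + 1), ‖v j‖ * D * (K * d) := by
        refine (Finset.abs_sum_le_sum_abs _ _).trans (Finset.sum_le_sum fun j _ => ?_)
        rw [abs_mul]
        exact mul_le_mul (hcoord j) (hvert _) (abs_nonneg _) (by positivity)
    _ = ∑ j : Fin (m + 1), ‖v j‖ * (η * d) * (K / η * D) :=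
        Finset.sum_congr rfl fun j _ => by field_simp
    _ ≤ ∑ _j : Fin (m + 1), (m + 1) ^ (m + 1) * 2 ^ m * (K / η * D) := by
        refine Finset.sum_le_sum fun j _ => mul_le_mul_of_nonneg_right ?_ (by positivity)
        exact hx.norm_mul_diam_le hfull (hvV j) (hv j)
    _ = ((m + 1) ^ (m + 2) * 2 ^ m / η * K) * D := by
        simp only [Finset.sum_const, Finset.card_univ, Fintype.card_fin, nsmul_eq_mul]
        push_cast
        ring
    _ = _ := by rw [NNReal.coe_mul, Real.coe_toNNReal _ (by positivity)]

end InnerProductSpace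

theorem stmt9 (k : ℕ) :
    ∃ c : ℝ, 0 < c ∧ ∀ (n : ℕ) (x : Fin (k + 1) → EuclideanSpace ℝ (Fin n)),
      AffineIndependent ℝ x →
      ∀ (η L : ℝ), 0 < η →
      ∀ f : EuclideanSpace ℝ (Fin n) → ℝ,
      LipschitzOnWith (Real.toNNReal L) f (convexHull ℝ (Set.range x)) →
      ENNReal.ofReal (η * diam (convexHull ℝ (Set.range x)) ^ k) ≤
        μH[(k : ℝ)] (convexHull ℝ (Set.range x)) →
      ∀ fhat : EuclideanSpace ℝ (Fin n) → ℝ,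
      (∀ a : Fin (k + 1) → ℝ, (∀ i, 0 ≤ a i) → ∑ i, a i = 1 →
        fhat (∑ i, a i • x i) = ∑ i, a i * f (x i)) →
      LipschitzOnWith (Real.toNNReal (c * L / η)) fhat (convexHull ℝ (Set.range x)) := by
  refine ⟨(k + 1) ^ (k + 1) * 2 ^ k, by positivity, ?_⟩
  intro n x hx η L hη f hf hfull fhat hfhat
  obtain _ | m := k
  · rw [range_unique (ι := Fin 1), convexHull_singleton]
    exact LipschitzOnWith.of_dist_le_mul fun y hy z hz => by
      simp [mem_singleton_iff.mp hy, mem_singleton_iff.mp hz]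
  · refine (hx.lipschitzOnWith_interpolant hη hfull hf hfhat).weaken ?_
    have hc : ((m + 1 : ℝ) ^ (m + 2) * 2 ^ m) ≤
        ((m + 1 : ℕ) + 1 : ℝ) ^ (m + 1 + 1) * 2 ^ (m + 1) := by
      push_cast
      gcongr <;> norm_num
    rw [mul_div_right_comm _ L, Real.toNNReal_mul (by positivity)]
    gcongr
end

section
/- Existence of full simplices: for every k ≥ 1 there is a constant c(k) > 0 such that in every normed space X and every k-dimensional affine subspace S of X, there exists a k-simplex Δ ⊆ S with fullness Θ(Δ) = vol_k(Δ)/diam(Δ)^k ≥ c(k), where vol_k is k-dimensional Hausdorff measure induced by the norm. -/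
/-!
Choose an Auerbach basis e₁, …, e_k of the direction of `S`: unit vectors whose coordinate
functionals have norm at most 1. It is obtained by maximizing `|det|` over k-tuples of unit
vectors; by Cramer's rule each coordinate functional is a ratio of two such determinants, so
maximality bounds it by the norm. Extend the functionals to `X` by Hahn–Banach. The simplex
with vertices `p, e₁ + p, …, e_k + p` has diameter at most 2, and the functionals give a
1-Lipschitz affine map onto the corner simplex of `(Fin k → ℝ)` (sup norm), which contains the
cube `[0, 1/k]^k`. There `μH[k]` is Lebesgue measure, and 1-Lipschitz maps do not increase
`μH[k]`, so the simplex has measure at least `k⁻ᵏ ≥ (2k)⁻ᵏ diam^k`.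
-/

open MeasureTheory Metric Set Function

section Auerbach

variable {Y : Type*} [NormedAddCommGroup Y] [NormedSpace ℝ Y] {ι : Type*} [DecidableEq ι]

theorem AlternatingMap.abs_map_update_le_of_forall_abs_le (D : Y [⋀^ι]→ₗ[ℝ] ℝ) {v : ι → Y}
    (hmax : ∀ w : ι → Y, (∀ i, ‖w i‖ = 1) → |D w| ≤ |D v|) (hv : ∀ i, ‖v i‖ = 1)
    (i : ι) (y : Y) : |D (update v i y)| ≤ |D v| * ‖y‖ := by
  rcases eq_or_ne y 0 with rfl | hy
  · simp
  have hunit : ∀ j, ‖update v i (‖y‖⁻¹ • y) j‖ = 1 := by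
    intro j
    rcases eq_or_ne j i with rfl | hj
    · simp [norm_smul, hy]
    · simp [hj, hv j]
  calc |D (update v i y)| = |D (update v i (‖y‖⁻¹ • y))| * ‖y‖ := by
        rw [D.map_update_smul, smul_eq_mul, abs_mul, abs_inv, abs_norm]
        field_simp
    _ ≤ |D v| * ‖y‖ := mul_le_mul_of_nonneg_right (hmax _ hunit) (norm_nonneg y)

variable [Fintype ι]

theorem Module.Basis.continuous_det [FiniteDimensional ℝ Y] (b : Module.Basis ι ℝ Y) :
    Continuous b.det := by
  rw [show ⇑b.det = fun v => (b.toMatrix v).det from funext b.det_apply]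
  exact Continuous.matrix_det <| continuous_matrix fun i j =>
    (b.coord i).continuous_of_finiteDimensional.comp (continuous_apply j)

theorem Module.Basis.exists_forall_abs_det_le [FiniteDimensional ℝ Y] (b : Module.Basis ι ℝ Y) :
    ∃ v : ι → Y, (∀ i, ‖v i‖ = 1) ∧ b.det v ≠ 0 ∧
      ∀ w : ι → Y, (∀ i, ‖w i‖ = 1) → |b.det w| ≤ |b.det v| := by
  let K : Set (ι → Y) := univ.pi fun _ => sphere 0 1
  have hK : IsCompact K := isCompact_univ_pi fun _ => isCompact_sphere 0 1
  let u : ι → Y := fun i => ‖b i‖⁻¹ • b i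
  have hu : u ∈ K := fun i _ => by simpa using norm_smul_inv_norm (𝕜 := ℝ) (b.ne_zero i)
  have hdet_u : b.det u ≠ 0 := by
    simp only [u, AlternatingMap.map_smul_univ, b.det_self, smul_eq_mul, mul_one]
    exact Finset.prod_ne_zero_iff.2 fun i _ => by simp [b.ne_zero i]
  obtain ⟨v, hvK, hmax⟩ := hK.exists_isMaxOn ⟨u, hu⟩ b.continuous_det.abs.continuousOn
  refine ⟨v, fun i => by simpa using hvK i (mem_univ i), fun h => hdet_u ?_,
    fun w hw => hmax fun i _ => by simpa using hw i⟩
  simpa [h] using hmax hu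

theorem Module.Basis.exists_auerbach [FiniteDimensional ℝ Y] (b : Module.Basis ι ℝ Y) :
    ∃ e : Module.Basis ι ℝ Y, (∀ i, ‖e i‖ = 1) ∧ ∀ i y, |e.coord i y| ≤ ‖y‖ := by
  obtain ⟨v, hv, hdet, hmax⟩ := b.exists_forall_abs_det_le
  obtain ⟨hli, hsp⟩ := b.is_basis_iff_det.2 (isUnit_iff_ne_zero.2 hdet)
  refine ⟨Module.Basis.mk hli hsp.ge, by simpa using hv, fun i y => ?_⟩
  have cramer := congr($(b.det_smul_mk_coord_eq_det_update hli hsp.ge i) y)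
  simp only [LinearMap.smul_apply, smul_eq_mul, MultilinearMap.toLinearMap_apply] at cramer
  rw [← mul_le_mul_iff_right₀ (abs_pos.2 hdet), ← abs_mul, cramer]
  exact b.det.abs_map_update_le_of_forall_abs_le hmax hv i y

end Auerbach

theorem Submodule.exists_biorthogonal_of_finrank_eq {X : Type*} [NormedAddCommGroup X]
    [NormedSpace ℝ X] (E : Submodule ℝ X) [FiniteDimensional ℝ E] {k : ℕ}
    (hE : Module.finrank ℝ E = k) :
    ∃ (e : Fin k → X) (F : Fin k → StrongDual ℝ X), (∀ j, e j ∈ E) ∧ (∀ j, ‖e j‖ = 1) ∧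
      (∀ i, ‖F i‖ ≤ 1) ∧ ∀ i j, F i (e j) = if i = j then 1 else 0 := by
  obtain ⟨b, hb, hcoord⟩ := (Module.finBasisOfFinrankEq ℝ E hE).exists_auerbach
  have hcoord_norm : ∀ i, ‖LinearMap.toContinuousLinearMap (b.coord i)‖ ≤ 1 := fun i =>
    ContinuousLinearMap.opNorm_le_bound _ zero_le_one fun y => by simpa using hcoord i y
  choose F hFb hFn using fun i =>
    exists_extension_norm_eq E (LinearMap.toContinuousLinearMap (b.coord i))
  refine ⟨fun j => b j, F, fun j => (b j).2, fun j => by simpa using hb j,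
    fun i => (hFn i).trans_le (hcoord_norm i), fun i j => ?_⟩
  simp [hFb, Finsupp.single_apply, eq_comm]

section Simplex

variable {X : Type*} [NormedAddCommGroup X] [NormedSpace ℝ X] {k : ℕ}

theorem affineIndependent_cons_zero {R V : Type*} [Ring R] [AddCommGroup V] [Module R V]
    {n : ℕ} {v : Fin n → V} (hv : LinearIndependent R v) :
    AffineIndependent R (Fin.cons 0 v : Fin (n + 1) → V) := by
  rw [affineIndependent_iff_linearIndependent_vsub R _ 0,
    ← linearIndependent_equiv (finSuccAboveEquiv 0)]
  simpa [comp_def, finSuccAboveEquiv_apply] using hv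

theorem Icc_subset_convexHull_cons_zero_single :
    Icc 0 (fun _ => (k : ℝ)⁻¹) ⊆
      convexHull ℝ (range (Fin.cons 0 fun j => Pi.single j 1 : Fin (k + 1) → Fin k → ℝ)) := by
  intro a ⟨ha0, ha1⟩
  have hsum : ∑ j, a j ≤ 1 := calc
    ∑ j, a j ≤ ∑ _j : Fin k, (k : ℝ)⁻¹ := Finset.sum_le_sum fun j _ => ha1 j
    _ ≤ 1 := by simp [mul_inv_le_one]
  set w : Fin (k + 1) → ℝ := Fin.cons (1 - ∑ j, a j) a
  convert (convex_convexHull ℝ _).sum_mem (t := Finset.univ) (w := w) ?_ ?_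
    fun m _ => subset_convexHull ℝ _ (mem_range_self m)
  · ext i
    simp [w, Fin.sum_univ_succ, Pi.single_apply]
  · exact Fin.cases (by simpa [w]) (fun j => by simpa [w] using ha0 j)
  · simp [w, Fin.sum_univ_succ]

def dualCoords (p : X) (F : Fin k → StrongDual ℝ X) : X →ᵃ[ℝ] (Fin k → ℝ) :=
  (ContinuousLinearMap.pi F).toLinearMap.toAffineMap -
    AffineMap.const ℝ X (ContinuousLinearMap.pi F p)

theorem dualCoords_apply (p : X) (F : Fin k → StrongDual ℝ X) (z : X) :
    dualCoords p F z = fun i => F i z - F i p := rfl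

theorem lipschitzWith_dualCoords (p : X) {F : Fin k → StrongDual ℝ X} (hF : ∀ i, ‖F i‖ ≤ 1) :
    LipschitzWith 1 (dualCoords p F) := by
  set L := ContinuousLinearMap.pi F
  have hL : ‖L‖ ≤ 1 := ContinuousLinearMap.norm_pi_le_of_le hF zero_le_one
  refine LipschitzWith.of_dist_le_mul fun z w => ?_
  change dist (L z - L p) (L w - L p) ≤ _
  rw [dist_sub_right, NNReal.coe_one, one_mul, dist_eq_norm, dist_eq_norm, ← map_sub]
  exact L.le_of_opNorm_le hL _ |>.trans_eq (one_mul _)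

theorem dualCoords_comp_cons (p : X) {e : Fin k → X} {F : Fin k → StrongDual ℝ X}
    (hFe : ∀ i j, F i (e j) = if i = j then 1 else 0) :
    dualCoords p F ∘ Fin.cons p (fun j => e j + p) = Fin.cons 0 fun j => Pi.single j 1 := by
  ext m i
  induction m using Fin.cases <;> simp [dualCoords_apply, hFe, Pi.single_apply]

theorem affineIndependent_cons_add_of_biorthogonal (p : X) {e : Fin k → X}
    {F : Fin k → StrongDual ℝ X} (hFe : ∀ i j, F i (e j) = if i = j then 1 else 0) :
    AffineIndependent ℝ (Fin.cons p fun j => e j + p : Fin (k + 1) → X) := by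
  refine AffineIndependent.of_comp (dualCoords p F) ?_
  rw [dualCoords_comp_cons p hFe]
  exact affineIndependent_cons_zero (Pi.linearIndependent_single_one (Fin k) ℝ)

theorem ofReal_inv_pow_le_hausdorffMeasure_convexHull [MeasurableSpace X] [BorelSpace X]
    (p : X) {e : Fin k → X} {F : Fin k → StrongDual ℝ X} (hF : ∀ i, ‖F i‖ ≤ 1)
    (hFe : ∀ i j, F i (e j) = if i = j then 1 else 0) :
    ENNReal.ofReal ((k : ℝ)⁻¹ ^ k) ≤
      μH[k] (convexHull ℝ (range (Fin.cons p fun j => e j + p : Fin (k + 1) → X))) := by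
  have hμ : (μH[k] : Measure (Fin k → ℝ)) = volume := by
    simpa using hausdorffMeasure_pi_real (ι := Fin k)
  calc ENNReal.ofReal ((k : ℝ)⁻¹ ^ k) = μH[k] (Icc 0 fun _ : Fin k => (k : ℝ)⁻¹) := by
        simp [hμ, Real.volume_Icc_pi, ← ENNReal.ofReal_pow, inv_pow]
    _ ≤ μH[k] (dualCoords p F '' convexHull ℝ (range (Fin.cons p fun j => e j + p))) := by
        rw [AffineMap.image_convexHull, ← range_comp, dualCoords_comp_cons p hFe]
        exact measure_mono Icc_subset_convexHull_cons_zero_single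
    _ ≤ _ := by
        simpa using (lipschitzWith_dualCoords p hF).hausdorffMeasure_image_le k.cast_nonneg _

theorem diam_convexHull_cons_add_le (p : X) {e : Fin k → X} (he : ∀ j, ‖e j‖ = 1) :
    diam (convexHull ℝ (range (Fin.cons p fun j => e j + p : Fin (k + 1) → X))) ≤ 2 := by
  rw [convexHull_diam]
  refine (diam_le_of_subset_closedBall (x := p) zero_le_one ?_).trans_eq (mul_one 2)
  rintro _ ⟨m, rfl⟩
  induction m using Fin.cases <;> simp [he]

end Simplex

theorem stmt13 (k : ℕ) (hk : 1 ≤ k) :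
    ∃ c : ℝ, 0 < c ∧
      ∀ (X : Type) [NormedAddCommGroup X] [NormedSpace ℝ X]
        [MeasurableSpace X] [BorelSpace X] (S : AffineSubspace ℝ X),
        Module.finrank ℝ S.direction = k → (S : Set X).Nonempty →
        ∃ x : Fin (k + 1) → X, (∀ i, x i ∈ S) ∧ AffineIndependent ℝ x ∧
          ENNReal.ofReal (c * diam (convexHull ℝ (Set.range x)) ^ k) ≤
            μH[(k : ℝ)] (convexHull ℝ (Set.range x)) := by
  refine ⟨(2 * k : ℝ)⁻¹ ^ k, by positivity, ?_⟩
  intro X _ _ _ _ S hS ⟨p, hp⟩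
  have : FiniteDimensional ℝ S.direction := Module.finite_of_finrank_pos (hS ▸ hk)
  obtain ⟨e, F, heS, he, hF, hFe⟩ := S.direction.exists_biorthogonal_of_finrank_eq hS
  refine ⟨Fin.cons p fun j => e j + p, Fin.forall_fin_succ.2 ⟨hp, fun j =>
    AffineSubspace.vadd_mem_of_mem_direction (heS j) hp⟩,
    affineIndependent_cons_add_of_biorthogonal p hFe, ?_⟩
  refine (ENNReal.ofReal_le_ofReal ?_).trans
    (ofReal_inv_pow_le_hausdorffMeasure_convexHull p hF hFe)
  calc (2 * k : ℝ)⁻¹ ^ k * diam _ ^ k = ((2 * k : ℝ)⁻¹ * diam _) ^ k := (mul_pow ..).symm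
    _ ≤ ((2 * k : ℝ)⁻¹ * 2) ^ k := by
        gcongr
        exact diam_convexHull_cons_add_le p he
    _ = (k : ℝ)⁻¹ ^ k := by field_simp
end

section
/- Eilenberg inequality (coarea-type): let X be a metric space, f : X → ℝ Lipschitz, and A ⊆ X with finite k-dimensional Hausdorff measure (k ≥ 1). Then ∫_ℝ H^{k-1}(A ∩ f⁻¹(t)) dt ≤ c(k)·Lip(f)·H^k(A), where c(k) depends only on k. -/
open MeasureTheory

/-!
Cover `A` by sets `Tₙ` of small diameter with `∑ diam (Tₙ) ^ k` close to `μH[k] A`. The slice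
`A ∩ f ⁻¹' {t}` is covered by those `Tₙ` with `t ∈ f '' Tₙ`, so its `μH[k - 1]` is at most
`∑ₙ 1_{f '' Tₙ}(t) · diam (Tₙ) ^ (k - 1)` in the limit of finer covers. Integrating over `t` and
using `volume (f '' Tₙ) ≤ diam (f '' Tₙ) ≤ K · diam Tₙ` bounds the integral of this majorant by
`K · ∑ diam (Tₙ) ^ k`, and Fatou's lemma passes to the limit; in particular `c(k) = 1` works.
-/

open Set Filter Metric Topology
open scoped ENNReal NNReal

section

variable {X : Type*} [PseudoEMetricSpace X]

/-- The closure makes this measurable in `t` without changing its integral bound. -/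
noncomputable def sliceCoverSum (f : X → ℝ) (T : ℕ → Set X) (d t : ℝ) : ℝ≥0∞ :=
  ∑' n, (closure (f '' T n)).indicator (fun _ => ediam (T n) ^ d) t

theorem measurable_sliceCoverSum (f : X → ℝ) (T : ℕ → Set X) (d : ℝ) :
    Measurable (sliceCoverSum f T d) :=
  .tsum fun _ => measurable_const.indicator isClosed_closure.measurableSet

theorem LipschitzWith.lintegral_sliceCoverSum_le {f : X → ℝ} {K : ℝ≥0} (hf : LipschitzWith K f)
    {d : ℝ} (hd : 0 ≤ d) (T : ℕ → Set X) :
    ∫⁻ t, sliceCoverSum f T d t ≤ K * ∑' n, ediam (T n) ^ (d + 1) := by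
  simp only [sliceCoverSum]
  rw [lintegral_tsum fun _ =>
      (measurable_const.indicator isClosed_closure.measurableSet).aemeasurable,
    ← ENNReal.tsum_mul_left]
  refine ENNReal.tsum_le_tsum fun n => ?_
  rw [lintegral_indicator_const isClosed_closure.measurableSet,
    ENNReal.rpow_add_of_nonneg _ _ hd zero_le_one, ENNReal.rpow_one]
  calc ediam (T n) ^ d * volume (closure (f '' T n))
      ≤ ediam (T n) ^ d * (K * ediam (T n)) := by
        gcongr
        exact (Real.volume_le_diam _).trans ((ediam_closure _).trans_le (hf.ediam_image_le _))
    _ = K * (ediam (T n) ^ d * ediam (T n)) := by ring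

end

section

variable {X : Type*} [EMetricSpace X] [MeasurableSpace X] [BorelSpace X]

theorem exists_cover_tsum_ediam_rpow_lt {d : ℝ} (hd : 0 < d) {s : Set X} {c : ℝ≥0∞}
    (hs : μH[d] s < c) {r : ℝ≥0∞} (hr : 0 < r) :
    ∃ T : ℕ → Set X, s ⊆ ⋃ n, T n ∧ (∀ n, ediam (T n) ≤ r) ∧ ∑' n, ediam (T n) ^ d < c := by
  have hcontent : (⨅ (T : ℕ → Set X) (_ : s ⊆ ⋃ n, T n) (_ : ∀ n, ediam (T n) ≤ r),
      ∑' n, ⨆ _ : (T n).Nonempty, ediam (T n) ^ d) < c := by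
    refine lt_of_le_of_lt ?_ hs
    rw [Measure.hausdorffMeasure_apply]
    exact le_iSup₂ (f := fun r (_ : 0 < r) => ⨅ (T : ℕ → Set X) (_ : s ⊆ ⋃ n, T n)
      (_ : ∀ n, ediam (T n) ≤ r), ∑' n, ⨆ _ : (T n).Nonempty, ediam (T n) ^ d) r hr
  simp only [iInf_lt_iff] at hcontent
  obtain ⟨T, hsT, hTr, hsum⟩ := hcontent
  refine ⟨T, hsT, hTr, hsum.trans_le' (ENNReal.tsum_le_tsum fun n => ?_)⟩
  rcases (T n).eq_empty_or_nonempty with h | h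
  · simp [h, hd]
  · exact le_iSup_of_le h le_rfl

theorem hausdorffMeasure_inter_preimage_singleton_le_liminf {β : Type*} {l : Filter β}
    (f : X → ℝ) (d : ℝ) {s : Set X} (T : β → ℕ → Set X) (r : β → ℝ≥0∞)
    (hr : Tendsto r l (𝓝 0)) (hTr : ∀ᶠ j in l, ∀ n, ediam (T j n) ≤ r j)
    (hsT : ∀ᶠ j in l, s ⊆ ⋃ n, T j n) (t : ℝ) :
    μH[d] (s ∩ f ⁻¹' {t}) ≤ liminf (fun j => sliceCoverSum f (T j) d t) l := by
  have hslice : ∀ᶠ j in l, s ∩ f ⁻¹' {t} ⊆ ⋃ n : {n // t ∈ closure (f '' T j n)}, T j n := by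
    filter_upwards [hsT] with j hj
    rintro x ⟨hxs, rfl⟩
    obtain ⟨n, hn⟩ := mem_iUnion.1 (hj hxs)
    exact mem_iUnion.2 ⟨⟨n, subset_closure (mem_image_of_mem f hn)⟩, hn⟩
  convert Measure.hausdorffMeasure_le_liminf_tsum d _ r hr
    (fun j (n : {n // t ∈ closure (f '' T j n)}) => T j n)
    (hTr.mono fun _ h n => h n) hslice using 3 with j
  exact (tsum_subtype {n | t ∈ closure (f '' T j n)} fun n => ediam (T j n) ^ d).symm

theorem LipschitzWith.lintegral_hausdorffMeasure_inter_preimage_singleton_le {f : X → ℝ}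
    {K : ℝ≥0} (hf : LipschitzWith K f) {d : ℝ} (hd : 0 ≤ d) {A : Set X}
    (hA : μH[d + 1] A < ⊤) :
    ∫⁻ t, μH[d] (A ∩ f ⁻¹' {t}) ≤ K * μH[d + 1] A := by
  have hcover : ∀ j : ℕ, ∃ T : ℕ → Set X, A ⊆ ⋃ n, T n ∧
      (∀ n, ediam (T n) ≤ (j : ℝ≥0∞)⁻¹) ∧
      ∑' n, ediam (T n) ^ (d + 1) < μH[d + 1] A + (j : ℝ≥0∞)⁻¹ := fun j =>
    exists_cover_tsum_ediam_rpow_lt (by linarith)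
      (ENNReal.lt_add_right hA.ne (ENNReal.inv_ne_zero.2 (ENNReal.natCast_ne_top j)))
      (ENNReal.inv_pos.2 (ENNReal.natCast_ne_top j))
  choose T hAT hTr hTsum using hcover
  have hbound : Tendsto (fun j : ℕ => (K : ℝ≥0∞) * (μH[d + 1] A + (j : ℝ≥0∞)⁻¹)) atTop
      (𝓝 (K * μH[d + 1] A)) := by
    simpa using ENNReal.Tendsto.const_mul
      (tendsto_const_nhds.add ENNReal.tendsto_inv_nat_nhds_zero) (Or.inr ENNReal.coe_ne_top)
  calc ∫⁻ t, μH[d] (A ∩ f ⁻¹' {t})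
      ≤ ∫⁻ t, liminf (fun j => sliceCoverSum f (T j) d t) atTop :=
        lintegral_mono fun t => hausdorffMeasure_inter_preimage_singleton_le_liminf f d T _
          ENNReal.tendsto_inv_nat_nhds_zero (.of_forall hTr) (.of_forall hAT) t
    _ ≤ liminf (fun j => ∫⁻ t, sliceCoverSum f (T j) d t) atTop :=
        lintegral_liminf_le fun j => measurable_sliceCoverSum f (T j) d
    _ ≤ liminf (fun j : ℕ => (K : ℝ≥0∞) * (μH[d + 1] A + (j : ℝ≥0∞)⁻¹)) atTop :=
        liminf_le_liminf (.of_forall fun j =>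
          (hf.lintegral_sliceCoverSum_le hd (T j)).trans (by gcongr; exact (hTsum j).le))
    _ = K * μH[d + 1] A := hbound.liminf_eq

end

theorem stmt14 (k : ℕ) (hk : 1 ≤ k) :
    ∃ c : ℝ, 0 < c ∧
      ∀ (X : Type) [MetricSpace X] [MeasurableSpace X] [BorelSpace X]
        (f : X → ℝ) (K : NNReal), LipschitzWith K f →
        ∀ A : Set X, μH[(k : ℝ)] A < ⊤ →
        ∫⁻ t : ℝ, μH[(k : ℝ) - 1] (A ∩ f ⁻¹' {t}) ≤
          ENNReal.ofReal c * (K : ENNReal) * μH[(k : ℝ)] A := by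
  refine ⟨1, one_pos, fun X _ _ _ f K hf A hA => ?_⟩
  have hd : (0 : ℝ) ≤ k - 1 := sub_nonneg.2 (by exact_mod_cast hk)
  rw [ENNReal.ofReal_one, one_mul]
  simpa using hf.lintegral_hausdorffMeasure_inter_preimage_singleton_le hd (A := A)
    (by simpa using hA)
end

section
/- Cone mass estimate in ℝⁿ: let P ⊆ ℝⁿ be a set contained in a k-dimensional affine subspace S with H^k(P) < ∞, and let z ∈ ℝⁿ. Then the cone C_z P = {(1-t)z + tx : x ∈ P, t ∈ [0,1]} satisfies H^{k+1}(C_z P) ≤ c(k)·dist(z, S)·H^k(P) for a constant c(k) depending only on k. -/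
/-!
Inside the `(k + 1)`-dimensional span of `S` and `z`, slice the cone by the hyperplanes parallel
to `S`. The slice at relative height `s ∈ [0, 1)` towards `z` is the image of `P` under the
homothety with centre `z` and ratio `1 - s`, so its `k`-dimensional measure is at most that of
`P`; integrating over the height, which ranges over an interval of length `dist(z, S)`, gives the
bound for the normalised Hausdorff measures `μHE`, and these differ from `μH` by factors depending
only on the dimension. To make the slicing formula applicable, `P` is replaced by a measurable
hull and the cone minus its apex is written as a preimage of that hull under the radial
projection from `z`. If `z ∈ S`, the cone lies in `S` and is `μH[k + 1]`-null.
-/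

open MeasureTheory Metric Set Module
open scoped ENNReal NNReal RealInnerProductSpace

section
variable {V : Type*} [NormedAddCommGroup V] [InnerProductSpace ℝ V]

lemma mem_mk'_orthogonal_singleton_iff {q v : V} {x : ℝ} :
    q ∈ AffineSubspace.mk' (x • v +ᵥ (0 : V)) (ℝ ∙ v)ᗮ ↔ ⟪v, q⟫ = x * ‖v‖ ^ 2 := by
  rw [AffineSubspace.mem_mk', Submodule.mem_orthogonal_singleton_iff_inner_right, vsub_eq_sub,
    vadd_eq_add, add_zero, inner_sub_right, real_inner_smul_right, real_inner_self_eq_norm_sq,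
    sub_eq_zero]

/-- The cone with apex `v` over `B ⊆ (ℝ ∙ v)ᗮ`, without its apex, written as a preimage of `B`:
`⟪v, q⟫ / ‖v‖ ^ 2` is the height of `q` relative to that of `v`, and
`v + (1 - height)⁻¹ • (q - v)` is the radial projection of `q` from `v` onto `(ℝ ∙ v)ᗮ`. -/
def puncturedCone (v : V) (B : Set V) : Set V :=
  {q | ⟪v, q⟫ / ‖v‖ ^ 2 ∈ Ico 0 1 ∧ v + (1 - ⟪v, q⟫ / ‖v‖ ^ 2)⁻¹ • (q - v) ∈ B}

lemma convexJoin_subset_insert_puncturedCone {v : V} (hv : v ≠ 0) {B : Set V}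
    (hBv : B ⊆ (ℝ ∙ v)ᗮ) : convexJoin ℝ {v} B ⊆ insert v (puncturedCone v B) := by
  simp only [convexJoin_singleton_left, iUnion_subset_iff, segment_eq_image, image_subset_iff]
  intro b hb θ ⟨hθ0, hθ1⟩
  rcases hθ0.eq_or_lt with rfl | hθ0
  · simp
  have hheight : ⟪v, (1 - θ) • v + θ • b⟫ / ‖v‖ ^ 2 = 1 - θ := by
    rw [inner_add_right, real_inner_smul_right, real_inner_smul_right, real_inner_self_eq_norm_sq,
      Submodule.mem_orthogonal_singleton_iff_inner_right.1 (hBv hb), mul_zero, add_zero,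
      mul_div_cancel_right₀ _ (by positivity)]
  refine Or.inr ⟨?_, ?_⟩
  · rw [hheight]; constructor <;> linarith
  · rwa [hheight, sub_sub_cancel, show (1 - θ) • v + θ • b - v = θ • (b - v) by module,
      smul_smul, inv_mul_cancel₀ hθ0.ne', one_smul, add_sub_cancel]

lemma puncturedCone_inter_mk'_subset_homothety_image {v : V} (hv : v ≠ 0) (B : Set V) (x : ℝ) :
    puncturedCone v B ∩ AffineSubspace.mk' (x • v +ᵥ (0 : V)) (ℝ ∙ v)ᗮ ⊆
      if x ∈ Ico 0 1 then AffineMap.homothety v (1 - x) '' B else ∅ := by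
  rintro q ⟨⟨hq₁, hq₂⟩, hq⟩
  rw [mem_mk'_orthogonal_singleton_iff.1 hq, mul_div_cancel_right₀ _ (by positivity)] at hq₁ hq₂
  rw [if_pos hq₁]
  refine ⟨_, hq₂, ?_⟩
  rw [AffineMap.homothety_apply, vsub_eq_sub, vadd_eq_add, add_sub_cancel_left, smul_smul,
    mul_inv_cancel₀ (by linarith [hq₁.2]), one_smul, sub_add_cancel]

variable [MeasurableSpace V] [BorelSpace V]

lemma euclideanHausdorffMeasure_puncturedCone_inter_mk'_le {v : V} (hv : v ≠ 0) (B : Set V)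
    (x : ℝ) (d : ℕ) :
    μHE[d] (puncturedCone v B ∩ AffineSubspace.mk' (x • v +ᵥ (0 : V)) (ℝ ∙ v)ᗮ) ≤
      (Ico 0 1).indicator (fun _ => μHE[d] B) x := by
  grw [puncturedCone_inter_mk'_subset_homothety_image hv B x]
  split_ifs with hx
  · rw [indicator_of_mem hx, euclideanHausdorffMeasure_homothety_image _ v
      (by linarith [hx.2] : 1 - x ≠ 0), ENNReal.smul_def]
    refine mul_le_of_le_one_left zero_le (ENNReal.coe_le_one_iff.2 (pow_le_one₀ zero_le ?_))
    rw [← NNReal.coe_le_one, coe_nnnorm, Real.norm_of_nonneg (by linarith [hx.2])]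
    linarith [hx.1]
  · simp

variable [FiniteDimensional ℝ V]

lemma measurableSet_puncturedCone (v : V) {B : Set V} (hB : MeasurableSet B) :
    MeasurableSet (puncturedCone v B) := by
  have hheight : Measurable fun q : V => ⟪v, q⟫ / ‖v‖ ^ 2 := by fun_prop
  exact (hheight measurableSet_Ico).inter (measurable_const.add
    ((measurable_const.sub hheight).inv.smul (measurable_id.sub measurable_const)) hB)

theorem euclideanHausdorffMeasure_convexJoin_le_of_measurableSet {v : V} (hv : v ≠ 0)
    {B : Set V} (hB : MeasurableSet B) (hBv : B ⊆ (ℝ ∙ v)ᗮ) :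
    μHE[finrank ℝ V] (convexJoin ℝ {v} B) ≤ ‖v‖ₑ * μHE[finrank ℝ V - 1] B := by
  have : Nontrivial V := ⟨⟨v, 0, hv⟩⟩
  calc μHE[finrank ℝ V] (convexJoin ℝ {v} B) ≤ μHE[finrank ℝ V] (puncturedCone v B) := by
        grw [convexJoin_subset_insert_puncturedCone hv hBv, measure_congr (insert_ae_eq_self _ _)]
    _ = ‖v‖ₑ * ∫⁻ x : ℝ, μHE[finrank ℝ V - 1]
          (puncturedCone v B ∩ AffineSubspace.mk' (x • v +ᵥ (0 : V)) (ℝ ∙ v)ᗮ) :=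
        EuclideanGeometry.euclideanHausdorffMeasure_eq_lintegral 0 hv
          (measurableSet_puncturedCone v hB)
    _ ≤ ‖v‖ₑ * ∫⁻ x : ℝ, (Ico 0 1).indicator (fun _ => μHE[finrank ℝ V - 1] B) x := by
        gcongr with x
        exact euclideanHausdorffMeasure_puncturedCone_inter_mk'_le hv B x _
    _ = ‖v‖ₑ * μHE[finrank ℝ V - 1] B := by
        rw [lintegral_indicator_const measurableSet_Ico, Real.volume_Ico, sub_zero,
          ENNReal.ofReal_one, mul_one]

theorem euclideanHausdorffMeasure_convexJoin_le {v : V} (hv : v ≠ 0) {P : Set V}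
    (hPv : P ⊆ (ℝ ∙ v)ᗮ) :
    μHE[finrank ℝ V] (convexJoin ℝ {v} P) ≤ ‖v‖ₑ * μHE[finrank ℝ V - 1] P := by
  set B := toMeasurable μHE[finrank ℝ V - 1] P ∩ (ℝ ∙ v)ᗮ
  have hB : MeasurableSet B :=
    (measurableSet_toMeasurable _ _).inter (Submodule.closed_of_finiteDimensional _).measurableSet
  calc μHE[finrank ℝ V] (convexJoin ℝ {v} P) ≤ μHE[finrank ℝ V] (convexJoin ℝ {v} B) :=
        measure_mono (convexJoin_mono subset_rfl (subset_inter (subset_toMeasurable _ _) hPv))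
    _ ≤ ‖v‖ₑ * μHE[finrank ℝ V - 1] B :=
        euclideanHausdorffMeasure_convexJoin_le_of_measurableSet hv hB inter_subset_right
    _ ≤ ‖v‖ₑ * μHE[finrank ℝ V - 1] P := by
        grw [show B ⊆ _ from inter_subset_left, measure_toMeasurable]

end

section
variable {E : Type*} [NormedAddCommGroup E] [InnerProductSpace ℝ E]

lemma Submodule.finrank_sup_span_singleton_of_mem_orthogonal (K : Submodule ℝ E)
    [FiniteDimensional ℝ K] {v : E} (hv : v ≠ 0) (hvK : v ∈ Kᗮ) :
    finrank ℝ (K ⊔ ℝ ∙ v : Submodule ℝ E) = finrank ℝ K + 1 := by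
  have hdisj : Disjoint K (ℝ ∙ v) :=
    K.orthogonal_disjoint.mono_right ((span_singleton_le_iff_mem _ _).2 hvK)
  have := finrank_sup_add_finrank_inf_eq K (ℝ ∙ v)
  rwa [hdisj.eq_bot, finrank_bot, add_zero, finrank_span_singleton hv] at this

variable [MeasurableSpace E] [BorelSpace E]

theorem AffineSubspace.euclideanHausdorffMeasure_eq_zero (S : AffineSubspace ℝ E)
    [FiniteDimensional ℝ S.direction] {d : ℕ} (hd : finrank ℝ S.direction < d) :
    μHE[d] (S : Set E) = 0 := by
  rcases (S : Set E).eq_empty_or_nonempty with hS | ⟨p, hp⟩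
  · rw [hS, measure_empty]
  have hrange : (S : Set E) = (fun x : S.direction => (x : E) + p) '' univ := by
    ext q
    simp only [image_univ, mem_range, Subtype.exists, SetLike.mem_coe]
    refine ⟨fun hq => ⟨q - p, (vsub_right_mem_direction_iff_mem hp q).2 hq, sub_add_cancel q p⟩,
      ?_⟩
    rintro ⟨w, hw, rfl⟩
    exact (vsub_right_mem_direction_iff_mem hp _).1 (by simpa using hw)
  have hiso : Isometry (fun x : S.direction => (x : E) + p) :=
    (isometry_add_right p).comp isometry_subtype_coe
  have hzero : (μH[d] : Measure S.direction) = 0 :=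
    Real.hausdorffMeasure_of_finrank_lt (by exact_mod_cast hd)
  rw [hrange, hiso.euclideanHausdorffMeasure_image, Measure.euclideanHausdorffMeasure_def,
    Measure.smul_apply, hzero, Measure.coe_zero, Pi.zero_apply, smul_zero]

theorem AffineSubspace.euclideanHausdorffMeasure_convexJoin_le_of_notMem (S : AffineSubspace ℝ E)
    [Nonempty S] [FiniteDimensional ℝ S.direction] {P : Set E} (hPS : P ⊆ S) {z : E}
    (hz : z ∉ S) :
    μHE[finrank ℝ S.direction + 1] (convexJoin ℝ {z} P) ≤
      ENNReal.ofReal (infDist z S) * μHE[finrank ℝ S.direction] P := by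
  set p : E := (EuclideanGeometry.orthogonalProjection S z : E)
  have hp : p ∈ S := EuclideanGeometry.orthogonalProjection_mem z
  set v : E := z - p
  have hvS : v ∈ S.directionᗮ :=
    EuclideanGeometry.vsub_orthogonalProjection_mem_direction_orthogonal S z
  have hv : v ≠ 0 := sub_ne_zero.2 fun h => hz (h ▸ hp)
  set V := S.direction ⊔ ℝ ∙ v
  have hV : finrank ℝ V = finrank ℝ S.direction + 1 :=
    S.direction.finrank_sup_span_singleton_of_mem_orthogonal hv hvS
  set v' : V := ⟨v, Submodule.mem_sup_right (Submodule.mem_span_singleton_self v)⟩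
  set G : V → E := fun x => (x : E) + p
  have hG : Isometry G := (isometry_add_right p).comp isometry_subtype_coe
  have hPG : P ⊆ range G := fun x hx =>
    ⟨⟨x - p, Submodule.mem_sup_left ((vsub_right_mem_direction_iff_mem hp x).2 (hPS hx))⟩,
      sub_add_cancel x p⟩
  have hP' : G ⁻¹' P ⊆ (ℝ ∙ v')ᗮ := fun x hx => by
    rw [SetLike.mem_coe, Submodule.mem_orthogonal_singleton_iff_inner_right, Submodule.coe_inner]
    refine Submodule.inner_left_of_mem_orthogonal ?_ hvS
    simpa [G] using (vsub_right_mem_direction_iff_mem hp _).2 (hPS hx)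
  have hcone : convexJoin ℝ {z} P ⊆ G '' convexJoin ℝ {v'} (G ⁻¹' P) := by
    simp only [convexJoin_singleton_left, iUnion_subset_iff, segment_eq_image, image_subset_iff]
    intro x hx θ hθ
    obtain ⟨x', rfl⟩ := hPG hx
    refine ⟨(1 - θ) • v' + θ • x', mem_iUnion₂.2 ⟨x', hx, θ, hθ, rfl⟩, ?_⟩
    simp only [G, v', v, Submodule.coe_add, Submodule.coe_smul]
    module
  calc μHE[finrank ℝ S.direction + 1] (convexJoin ℝ {z} P)
      ≤ μHE[finrank ℝ V] (convexJoin ℝ {v'} (G ⁻¹' P)) := by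
        grw [hcone, hG.euclideanHausdorffMeasure_image, hV]
    _ ≤ ‖v'‖ₑ * μHE[finrank ℝ V - 1] (G ⁻¹' P) :=
        euclideanHausdorffMeasure_convexJoin_le (by simpa [v'] using hv) hP'
    _ = ENNReal.ofReal (infDist z S) * μHE[finrank ℝ S.direction] P := by
        rw [hV, Nat.add_sub_cancel, ← hG.euclideanHausdorffMeasure_image,
          image_preimage_eq_of_subset hPG,
          ← EuclideanGeometry.dist_orthogonalProjection_eq_infDist, dist_eq_norm, ofReal_norm]
        rfl

theorem AffineSubspace.euclideanHausdorffMeasure_convexJoin_le (S : AffineSubspace ℝ E)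
    [FiniteDimensional ℝ S.direction] {P : Set E} (hPS : P ⊆ S) (z : E) :
    μHE[finrank ℝ S.direction + 1] (convexJoin ℝ {z} P) ≤
      ENNReal.ofReal (infDist z S) * μHE[finrank ℝ S.direction] P := by
  rcases (S : Set E).eq_empty_or_nonempty with hS | ⟨p, hp⟩
  · simp [subset_empty_iff.1 (hS ▸ hPS)]
  have : Nonempty S := ⟨⟨p, hp⟩⟩
  by_cases hz : z ∈ S
  · have hcone : convexJoin ℝ {z} P ⊆ S :=
      convexJoin_subset (singleton_subset_iff.2 hz) hPS S.convex
    rw [measure_mono_null hcone (S.euclideanHausdorffMeasure_eq_zero (Nat.lt_succ_self _))]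
    exact zero_le
  · exact S.euclideanHausdorffMeasure_convexJoin_le_of_notMem hPS hz

end

lemma convexJoin_singleton_left_eq_setOf {𝕜 E : Type*} [Ring 𝕜] [PartialOrder 𝕜]
    [AddRightMono 𝕜] [AddCommGroup E] [Module 𝕜 E] (z : E) (P : Set E) :
    convexJoin 𝕜 {z} P = {p | ∃ x ∈ P, ∃ t ∈ Icc (0 : 𝕜) 1, p = (1 - t) • z + t • x} := by
  ext p
  simp [convexJoin_singleton_left, segment_eq_image, eq_comm]

theorem stmt18 (k : ℕ) :
    ∃ c : ℝ, 0 < c ∧ ∀ (n : ℕ) (S : AffineSubspace ℝ (EuclideanSpace ℝ (Fin n))),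
      (S : Set (EuclideanSpace ℝ (Fin n))).Nonempty →
      Module.finrank ℝ S.direction = k →
      ∀ P : Set (EuclideanSpace ℝ (Fin n)),
        P ⊆ (S : Set (EuclideanSpace ℝ (Fin n))) → μH[(k : ℝ)] P < ⊤ →
      ∀ z : EuclideanSpace ℝ (Fin n),
        μH[(k : ℝ) + 1] {p | ∃ x ∈ P, ∃ t ∈ Set.Icc (0 : ℝ) 1, p = (1 - t) • z + t • x} ≤
          ENNReal.ofReal (c * infDist z (S : Set (EuclideanSpace ℝ (Fin n)))) *
            μH[(k : ℝ)] P := by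
  -- `μHE[d] = α d • μH[d]` with `α d ≠ 0`, so the bound for `μHE` transfers with
  -- `c = α k / α (k + 1)`
  set α : ℕ → ℝ≥0 := fun d =>
    Measure.addHaarScalarFactor (volume : Measure (EuclideanSpace ℝ (Fin d))) μH[d]
  have hα : ∀ d, α d ≠ 0 := Measure.addHaarScalarFactor_volume_hausdorffMeasure_ne_zero
  refine ⟨(α k / α (k + 1) : ℝ≥0),
    NNReal.coe_pos.2 (div_pos (pos_iff_ne_zero.2 (hα k)) (pos_iff_ne_zero.2 (hα (k + 1)))),
    fun n S _ hrk P hPS _ z => ?_⟩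
  have key := S.euclideanHausdorffMeasure_convexJoin_le hPS z
  rw [hrk, convexJoin_singleton_left_eq_setOf, Measure.euclideanHausdorffMeasure_def,
    Measure.euclideanHausdorffMeasure_def, Measure.smul_apply, Measure.smul_apply,
    ENNReal.smul_def, ENNReal.smul_def, smul_eq_mul, smul_eq_mul] at key
  rw [← Nat.cast_succ]
  calc _ = (α (k + 1) : ℝ≥0∞)⁻¹ * (α (k + 1) * μH[((k + 1 : ℕ) : ℝ)] _) :=
        (ENNReal.inv_mul_cancel_left (by simpa using hα _) ENNReal.coe_ne_top).symm
    _ ≤ (α (k + 1) : ℝ≥0∞)⁻¹ * (ENNReal.ofReal (infDist z S) * (α k * μH[(k : ℝ)] P)) := by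
        gcongr
    _ = _ := by
        rw [ENNReal.ofReal_mul (NNReal.coe_nonneg _), ENNReal.ofReal_coe_nnreal,
          ENNReal.coe_div (hα _), div_eq_mul_inv]
        ring
end
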